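/- The Riemann theta function ϑ_τ satisfies the functional equation ϑ_τ(z + m + τn) = exp(-πi⟨n, 2z + τn⟩) · ϑ_τ(z) for all m, n ∈ ℤ^g and z ∈ ℂ^g. Equivalently, ϑ_τ is a theta function for the factor of automorphy e_γ(z) = exp(-πi⟨n, 2z+τn⟩). -/

import Mathlib

open Complex

/-- The standard bilinear pairing `⟨z,w⟩ = Σ_i z_i w_i` on `ℂ^g`. -/
noncomputable def pairing (g : ℕ) (z w : Fin g → ℂ) : ℂ := ∑ i, z i * w i

/-- The Riemann theta function `ϑ_τ(z) = Σ_{m ∈ ℤ^g} exp(πi⟨m, 2z + τm⟩)`. -/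
noncomputable def riemannTheta (g : ℕ) (τ : Matrix (Fin g) (Fin g) ℂ) (z : Fin g → ℂ) : ℂ :=
  ∑' m : Fin g → ℤ, Complex.exp ((Real.pi : ℂ) * Complex.I *
    pairing g (fun i => (m i : ℂ)) (fun i => 2 * z i + ∑ j, τ i j * (m j : ℂ)))


/-!
Writing `l = k + n`, the exponent of the `k`-th summand of `ϑ_τ(z + m + τn)` is, by symmetry of
`τ`, the exponent of the `l`-th summand of `ϑ_τ(z)` minus `πi⟨n, 2z + τn⟩`, plus `2πi⟨k, m⟩ ∈ 2πiℤ`.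
So the two series agree term by term after reindexing by `k ↦ k + n`.
-/

open Matrix

lemma dotProduct_quadratic_shift {ι R : Type*} [Fintype ι] [CommRing R] {A : Matrix ι ι R}
    (hA : Aᵀ = A) (w v n x : ι → R) :
    (x - n) ⬝ᵥ ((2 : R) • (w + v + A *ᵥ n) + A *ᵥ (x - n)) =
      x ⬝ᵥ ((2 : R) • w + A *ᵥ x) - n ⬝ᵥ ((2 : R) • w + A *ᵥ n) + 2 * ((x - n) ⬝ᵥ v) := by
  have hswap : x ⬝ᵥ A *ᵥ n = n ⬝ᵥ A *ᵥ x := by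
    simpa only [hA] using (dotProduct_transpose_mulVec A n x).symm
  simp only [mulVec_sub, smul_add, dotProduct_add, dotProduct_sub, sub_dotProduct,
    dotProduct_smul, smul_eq_mul]
  linear_combination hswap

noncomputable def riemannThetaTerm (g : ℕ) (τ : Matrix (Fin g) (Fin g) ℂ) (z : Fin g → ℂ)
    (l : Fin g → ℤ) : ℂ :=
  Complex.exp (Real.pi * Complex.I *
    ((fun i => (l i : ℂ)) ⬝ᵥ ((2 : ℂ) • z + τ *ᵥ fun i => (l i : ℂ))))

lemma riemannTheta_eq_tsum_riemannThetaTerm (g : ℕ) (τ : Matrix (Fin g) (Fin g) ℂ)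
    (z : Fin g → ℂ) : riemannTheta g τ z = ∑' l, riemannThetaTerm g τ z l :=
  rfl

lemma riemannThetaTerm_shift {g : ℕ} {τ : Matrix (Fin g) (Fin g) ℂ} (hsym : τᵀ = τ)
    (m n l : Fin g → ℤ) (z : Fin g → ℂ) :
    riemannThetaTerm g τ (z + (fun i => (m i : ℂ)) + τ *ᵥ fun i => (n i : ℂ)) (l - n) =
      Complex.exp (-Real.pi * Complex.I *
          ((fun i => (n i : ℂ)) ⬝ᵥ ((2 : ℂ) • z + τ *ᵥ fun i => (n i : ℂ)))) *
        riemannThetaTerm g τ z l := by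
  have hcast : (fun i => ((l - n) i : ℂ)) = (fun i => (l i : ℂ)) - fun i => (n i : ℂ) :=
    funext fun i => Int.cast_sub (l i) (n i)
  have hint : (fun i => ((l - n) i : ℂ)) ⬝ᵥ (fun i => (m i : ℂ)) = (((l - n) ⬝ᵥ m : ℤ) : ℂ) := by
    simp [dotProduct]
  rw [riemannThetaTerm, riemannThetaTerm, ← Complex.exp_add, hcast,
    dotProduct_quadratic_shift hsym, ← hcast, hint]
  exact Complex.exp_eq_exp_iff_exists_int.mpr ⟨(l - n) ⬝ᵥ m, by ring⟩

theorem riemannTheta_functional_equation_general (g : ℕ) (τ : Matrix (Fin g) (Fin g) ℂ)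
    (hsym : τ.transpose = τ)
    (m n : Fin g → ℤ) (z : Fin g → ℂ) :
    riemannTheta g τ (fun i => z i + (m i : ℂ) + ∑ j, τ i j * (n j : ℂ)) =
      Complex.exp (-(Real.pi : ℂ) * Complex.I *
          pairing g (fun i => (n i : ℂ)) (fun i => 2 * z i + ∑ j, τ i j * (n j : ℂ))) *
        riemannTheta g τ z := by
  rw [riemannTheta_eq_tsum_riemannThetaTerm, riemannTheta_eq_tsum_riemannThetaTerm,
    ← tsum_mul_left, ← (Equiv.subRight n).tsum_eq]
  exact tsum_congr fun l => riemannThetaTerm_shift hsym m n l z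

/-- quasi-periodicity of the Riemann theta function:
`ϑ_τ(z + m + τn) = exp(-πi⟨n, 2z + τn⟩) ⬝ ϑ_τ(z)` for `m, n ∈ ℤ^g`; i.e. `ϑ_τ` is a theta
function for the classical factor of automorphy `e_γ(z) = exp(-πi⟨n, 2z + τn⟩)`. -/
theorem riemannTheta_functional_equation (g : ℕ) (τ : Matrix (Fin g) (Fin g) ℂ)
    (hsym : τ.transpose = τ) (hpos : (τ.map Complex.im).PosDef)
    (m n : Fin g → ℤ) (z : Fin g → ℂ) :
    riemannTheta g τ (fun i => z i + (m i : ℂ) + ∑ j, τ i j * (n j : ℂ)) =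
      Complex.exp (-(Real.pi : ℂ) * Complex.I *
          pairing g (fun i => (n i : ℂ)) (fun i => 2 * z i + ∑ j, τ i j * (n j : ℂ))) *
        riemannTheta g τ z :=
  riemannTheta_functional_equation_general g τ hsym m n z
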